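/- For every mixed session type T with un(T), the classical translation ⟦T⟧ is either end, unit, bool, a type μa.T' with un(T'), or a μ-type μb.un⋆(U).b with ⋆ ∈ {!, ?}; in particular, the translation of an unrestricted mixed choice type un♯{l_i ⋆_i S_i.T_i}_{i∈I} is an unrestricted classical communication type: un⊕ types translate to recursive un-output types μb.un!(lin⊕{l_i^{⋆_i} : lin ⋆_i ⟦S_i⟧.end}).b and un& types translate to recursive un-input types μb.un?(lin&{l_i^{•_i} : lin ⋆_i ⟦S_i⟧.end}).b, so the translation preserves the direction (output/input) of unrestricted type operators. -/

import Mathlib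

set_option maxHeartbeats 1000000

/-! # Basics -/

abbrev Name := Nat
abbrev Label := Nat

inductive Polarity where
  | out | inp
deriving DecidableEq

def Polarity.dual : Polarity → Polarity
  | .out => .inp
  | .inp => .out

inductive Qual where
  | lin | un
deriving DecidableEq

inductive View where
  | internal | external
deriving DecidableEq

def View.dual : View → View
  | .internal => .external
  | .external => .internal

inductive Val where
  | var (x : Name) | tt | ff | unit
deriving DecidableEq

def Val.fv : Val → List Name
  | .var x => [x]
  | _ => []

def Val.subst (z : Name) (v : Val) : Val → Val
  | .var x => if x = z then v else .var x
  | w => w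

def substName (z : Name) (v : Val) (x : Name) : Name :=
  if x = z then (match v with | .var w => w | _ => x) else x

abbrev CLabel := Label × Polarity

/-! # Classical session types -/

inductive CTy where
  | end_ | unit | bool
  | var (a : Name)
  | mu (a : Name) (T : CTy)
  | comm (q : Qual) (p : Polarity) (S T : CTy)
  | choice (q : Qual) (v : View) (bs : List (CLabel × CTy))

def CTy.subst (a : Name) (U : CTy) : CTy → CTy
  | .end_ => .end_
  | .unit => .unit
  | .bool => .bool
  | .var b => if b = a then U else .var b
  | .mu b T => if b = a then .mu b T else .mu b (CTy.subst a U T)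
  | .comm q p S T => .comm q p (CTy.subst a U S) (CTy.subst a U T)
  | .choice q v bs => .choice q v (bs.attach.map (fun e => (e.1.1, CTy.subst a U e.1.2)))
termination_by T => sizeOf T
decreasing_by
  all_goals simp_wf
  all_goals try omega
  all_goals
    (obtain ⟨⟨l, T⟩, hmem⟩ := e
     have h := List.sizeOf_lt_of_mem hmem
     simp only [Prod.mk.sizeOf_spec] at h ⊢
     omega)

def CTy.maxVar : CTy → Nat
  | .end_ | .unit | .bool => 0
  | .var a => a + 1
  | .mu a T => max (a + 1) T.maxVar
  | .comm _ _ S T => max S.maxVar T.maxVar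
  | .choice _ _ bs => (bs.attach.map (fun e => e.1.2.maxVar)).foldr max 0
termination_by T => sizeOf T
decreasing_by
  all_goals simp_wf
  all_goals try omega
  all_goals
    (obtain ⟨⟨l, T⟩, hmem⟩ := e
     have h := List.sizeOf_lt_of_mem hmem
     simp only [Prod.mk.sizeOf_spec] at h ⊢
     omega)

/-- The `un` predicate on classical types. -/
inductive CTy.Un : CTy → Prop
  | end_ : CTy.Un .end_
  | unit : CTy.Un .unit
  | bool : CTy.Un .bool
  | comm {p S T} : CTy.Un (.comm .un p S T)
  | choice {v bs} : CTy.Un (.choice .un v bs)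
  | mu {a T} : CTy.Un T → CTy.Un (.mu a T)

/-- lin-qualified pretypes (used in context split). -/
inductive CTy.IsLin : CTy → Prop
  | comm {p S T} : CTy.IsLin (.comm .lin p S T)
  | choice {v bs} : CTy.IsLin (.choice .lin v bs)

abbrev CCtx := List (Name × CTy)

def CCtxUn (Γ : CCtx) : Prop := ∀ e ∈ Γ, CTy.Un e.2

/-- The predicate `q(Γ)`:  `lin(Γ)` always holds, `un(Γ)` requires every type unrestricted. -/
def CQual (q : Qual) (Γ : CCtx) : Prop := q = .un → CCtxUn Γ

/-- Context split `Γ = Γ₁ ∘ Γ₂`. -/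
inductive CSplit : CCtx → CCtx → CCtx → Prop
  | nil : CSplit [] [] []
  | both {Γ Γ₁ Γ₂ x T} : CTy.Un T → CSplit Γ Γ₁ Γ₂ →
      CSplit ((x,T) :: Γ) ((x,T) :: Γ₁) ((x,T) :: Γ₂)
  | left {Γ Γ₁ Γ₂ x T} : CTy.IsLin T → CSplit Γ Γ₁ Γ₂ →
      CSplit ((x,T) :: Γ) ((x,T) :: Γ₁) Γ₂
  | right {Γ Γ₁ Γ₂ x T} : CTy.IsLin T → CSplit Γ Γ₁ Γ₂ →
      CSplit ((x,T) :: Γ) Γ₁ ((x,T) :: Γ₂)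

/-- Classical coinductive subtyping, formulated with a set `Θ` of assumed pairs. -/
inductive CSub : List (CTy × CTy) → CTy → CTy → Prop
  | assump {Θ S T} : (S, T) ∈ Θ → CSub Θ S T
  | end_ {Θ} : CSub Θ .end_ .end_
  | unit {Θ} : CSub Θ .unit .unit
  | bool {Θ} : CSub Θ .bool .bool
  | muL {Θ a S T} : CSub ((CTy.mu a S, T) :: Θ) (CTy.subst a (CTy.mu a S) S) T →
      CSub Θ (.mu a S) T
  | muR {Θ a S T} : CSub ((S, CTy.mu a T) :: Θ) S (CTy.subst a (CTy.mu a T) T) →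
      CSub Θ S (.mu a T)
  | commOut {Θ q S S' T T'} : CSub Θ T S → CSub Θ S' T' →
      CSub Θ (.comm q .out S S') (.comm q .out T T')
  | commIn {Θ q S S' T T'} : CSub Θ S T → CSub Θ S' T' →
      CSub Θ (.comm q .inp S S') (.comm q .inp T T')
  | internal {Θ q bs bs'} (f : Nat → Nat)
      (hf : ∀ i, i < bs'.length → f i < bs.length)
      (hlab : ∀ i (h : i < bs'.length), (bs.get ⟨f i, hf i h⟩).1 = (bs'.get ⟨i, h⟩).1)
      (hsub : ∀ i (h : i < bs'.length), CSub Θ (bs.get ⟨f i, hf i h⟩).2 (bs'.get ⟨i, h⟩).2) :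
      CSub Θ (.choice q .internal bs) (.choice q .internal bs')
  | external {Θ q bs bs'} (f : Nat → Nat)
      (hf : ∀ i, i < bs.length → f i < bs'.length)
      (hlab : ∀ i (h : i < bs.length), (bs'.get ⟨f i, hf i h⟩).1 = (bs.get ⟨i, h⟩).1)
      (hsub : ∀ i (h : i < bs.length), CSub Θ (bs.get ⟨i, h⟩).2 (bs'.get ⟨f i, hf i h⟩).2) :
      CSub Θ (.choice q .external bs) (.choice q .external bs')

def CEquiv (S T : CTy) : Prop := CSub [] S T ∧ CSub [] T S

/-- Classical coinductive type duality. -/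
inductive CDual : List (CTy × CTy) → CTy → CTy → Prop
  | assump {Θ S T} : (S, T) ∈ Θ → CDual Θ S T
  | end_ {Θ} : CDual Θ .end_ .end_
  | muL {Θ a S T} : CDual ((CTy.mu a S, T) :: Θ) (CTy.subst a (CTy.mu a S) S) T →
      CDual Θ (.mu a S) T
  | muR {Θ a S T} : CDual ((S, CTy.mu a T) :: Θ) S (CTy.subst a (CTy.mu a T) T) →
      CDual Θ S (.mu a T)
  | comm {Θ q p S S' T T'} : CSub [] S T → CSub [] T S → CDual Θ S' T' →
      CDual Θ (.comm q p S S') (.comm q p.dual T T')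
  | choice {Θ q sh bs bs'}
      (hlen : bs.length = bs'.length)
      (hlab : ∀ i (h : i < bs.length) (h' : i < bs'.length),
        (bs.get ⟨i, h⟩).1 = (bs'.get ⟨i, h'⟩).1)
      (hdual : ∀ i (h : i < bs.length) (h' : i < bs'.length),
        CDual Θ (bs.get ⟨i, h⟩).2 (bs'.get ⟨i, h'⟩).2) :
      CDual Θ (.choice q sh bs) (.choice q sh.dual bs')

/-- Context update `Γ + x : T = Γ'`. -/
inductive CUpdate : CCtx → Name → CTy → CCtx → Prop
  | add {Γ x T} : x ∉ Γ.map Prod.fst → CUpdate Γ x T ((x,T) :: Γ)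
  | keep {Γ₁ Γ₂ x T U} : CTy.Un T → CEquiv T U →
      CUpdate (Γ₁ ++ (x,T) :: Γ₂) x U (Γ₁ ++ (x,T) :: Γ₂)

/-- Classical value typing. -/
inductive CValTy : CCtx → Val → CTy → Prop
  | unit {Γ} : CCtxUn Γ → CValTy Γ .unit .unit
  | tt {Γ} : CCtxUn Γ → CValTy Γ .tt .bool
  | ff {Γ} : CCtxUn Γ → CValTy Γ .ff .bool
  | var {Γ₁ Γ₂ x T} : CCtxUn (Γ₁ ++ Γ₂) → CValTy (Γ₁ ++ (x,T) :: Γ₂) (.var x) T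
  | sub {Γ v S T} : CValTy Γ v S → CSub [] S T → CValTy Γ v T

/-! # Classical session processes -/

inductive CProc where
  | nil
  | par (P Q : CProc)
  | nu (x y : Name) (P : CProc)
  | send (x : Name) (v : Val) (P : CProc)
  | recv (q : Qual) (x z : Name) (P : CProc)
  | select (x : Name) (l : CLabel) (P : CProc)
  | branch (x : Name) (bs : List (CLabel × CProc))
  | ite (v : Val) (P Q : CProc)

def CProc.fv : CProc → List Name
  | .nil => []
  | .par P Q => P.fv ++ Q.fv
  | .nu x y P => P.fv.filter (fun n => n != x && n != y)
  | .send x v P => x :: (v.fv ++ P.fv)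
  | .recv _ x z P => x :: (P.fv.filter (fun n => n != z))
  | .select x _ P => x :: P.fv
  | .branch x bs => x :: (bs.attach.map (fun e => e.1.2.fv)).flatten
  | .ite v P Q => v.fv ++ P.fv ++ Q.fv
termination_by P => sizeOf P
decreasing_by
  all_goals simp_wf
  all_goals try omega
  all_goals
    (obtain ⟨⟨l, T⟩, hmem⟩ := e
     have h := List.sizeOf_lt_of_mem hmem
     simp only [Prod.mk.sizeOf_spec] at h ⊢
     omega)

def CProc.substV (z : Name) (v : Val) : CProc → CProc
  | .nil => .nil
  | .par P Q => .par (P.substV z v) (Q.substV z v)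
  | .nu x y P => if x = z ∨ y = z then .nu x y P else .nu x y (P.substV z v)
  | .send x w P => .send (substName z v x) (w.subst z v) (P.substV z v)
  | .recv q x y P => .recv q (substName z v x) y (if y = z then P else P.substV z v)
  | .select x l P => .select (substName z v x) l (P.substV z v)
  | .branch x bs => .branch (substName z v x) (bs.attach.map (fun e => (e.1.1, e.1.2.substV z v)))
  | .ite w P Q => .ite (w.subst z v) (P.substV z v) (Q.substV z v)
termination_by P => sizeOf P
decreasing_by
  all_goals simp_wf
  all_goals try omega
  all_goals
    (obtain ⟨⟨l, T⟩, hmem⟩ := e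
     have h := List.sizeOf_lt_of_mem hmem
     simp only [Prod.mk.sizeOf_spec] at h ⊢
     omega)

/-- Structural congruence for classical processes. -/
inductive CSc : CProc → CProc → Prop
  | parComm {P Q} : CSc (.par P Q) (.par Q P)
  | parAssoc {P Q R} : CSc (.par (.par P Q) R) (.par P (.par Q R))
  | parNil {P} : CSc (.par P .nil) P
  | scope {x y P Q} : CSc (.par (.nu x y P) Q) (.nu x y (.par P Q))
  | nuNil {x y} : CSc (.nu x y .nil) .nil
  | nuComm {w x y z P} : CSc (.nu w x (.nu y z P)) (.nu y z (.nu w x P))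
  | refl (P) : CSc P P
  | symm {P Q} : CSc P Q → CSc Q P
  | trans {P Q R} : CSc P Q → CSc Q R → CSc P R
  | parCong {P P' Q Q'} : CSc P P' → CSc Q Q' → CSc (.par P Q) (.par P' Q')
  | nuCong {x y P P'} : CSc P P' → CSc (.nu x y P) (.nu x y P')
  | sendCong {x v P P'} : CSc P P' → CSc (.send x v P) (.send x v P')
  | recvCong {q x z P P'} : CSc P P' → CSc (.recv q x z P) (.recv q x z P')
  | selectCong {x l P P'} : CSc P P' → CSc (.select x l P) (.select x l P')
  | iteCong {v P P' Q Q'} : CSc P P' → CSc Q Q' → CSc (.ite v P Q) (.ite v P' Q')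
  | branchCong {x bs bs'}
      (hlen : bs.length = bs'.length)
      (hlab : ∀ i (h : i < bs.length) (h' : i < bs'.length),
        (bs.get ⟨i, h⟩).1 = (bs'.get ⟨i, h'⟩).1)
      (hsc : ∀ i (h : i < bs.length) (h' : i < bs'.length),
        CSc (bs.get ⟨i, h⟩).2 (bs'.get ⟨i, h'⟩).2) :
      CSc (.branch x bs) (.branch x bs')

/-- Reduction for classical processes. -/
inductive CRed : CProc → CProc → Prop
  | linCom {x y v z P Q R} :
      CRed (.nu x y (.par (.send x v P) (.par (.recv .lin y z Q) R)))
           (.nu x y (.par P (.par (Q.substV z v) R)))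
  | unCom {x y v z P Q R} :
      CRed (.nu x y (.par (.send x v P) (.par (.recv .un y z Q) R)))
           (.nu x y (.par P (.par (Q.substV z v) (.par (.recv .un y z Q) R))))
  | case {x y l P Q R bs} : (l, Q) ∈ bs →
      CRed (.nu x y (.par (.select x l P) (.par (.branch y bs) R)))
           (.nu x y (.par P (.par Q R)))
  | iteT {P Q} : CRed (.ite .tt P Q) P
  | iteF {P Q} : CRed (.ite .ff P Q) Q
  | res {x y P Q} : CRed P Q → CRed (.nu x y P) (.nu x y Q)
  | par {P Q R} : CRed P Q → CRed (.par P R) (.par Q R)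
  | struct {P P' Q Q'} : CSc P P' → CRed P' Q' → CSc Q' Q → CRed P Q

/-- Multi-step reduction. -/
def CRedStar : CProc → CProc → Prop := Relation.ReflTransGen CRed

/-- `Π_{1 ≤ i ≤ n} Q_i`, for `n > 0`. -/
def bigPar : List CProc → CProc
  | [] => .nil
  | [P] => P
  | P :: Ps => .par P (bigPar Ps)

/-- Extended structural congruence `≍`: structural congruence plus garbage collection of
left-over selections of non-deterministic choices. -/
inductive CEsc : CProc → CProc → Prop
  | sc {P Q} : CSc P Q → CEsc P Q
  | collect {a b} (ls : List CLabel) :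
      CEsc (.nu a b (bigPar (ls.map (fun l => CProc.select a l .nil)))) .nil
  | symm {P Q} : CEsc P Q → CEsc Q P
  | trans {P Q R} : CEsc P Q → CEsc Q R → CEsc P R
  | parCong {P P' Q Q'} : CEsc P P' → CEsc Q Q' → CEsc (.par P Q) (.par P' Q')
  | nuCong {x y P P'} : CEsc P P' → CEsc (.nu x y P) (.nu x y P')

/-- The non-deterministic choice operator `NDChoice{P_i}_{i∈I}` on channel ends `s`,`t`. -/
def NDChoice (s t : Name) (ps : List CProc) : CProc :=
  .nu s t (.par
    (bigPar ((List.range ps.length).map (fun i => CProc.select s (i, Polarity.out) .nil)))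
    (.branch t (List.zip ((List.range ps.length).map (fun i => ((i, Polarity.out) : CLabel))) ps)))

/-- Classical process typing `Γ ⊢ P`. -/
inductive CTyped : CCtx → CProc → Prop
  | nil {Γ} : CCtxUn Γ → CTyped Γ .nil
  | par {Γ Γ₁ Γ₂ P Q} : CSplit Γ Γ₁ Γ₂ → CTyped Γ₁ P → CTyped Γ₂ Q → CTyped Γ (.par P Q)
  | res {Γ S T x y P} : CDual [] S T → CTyped ((x,S) :: (y,T) :: Γ) P → CTyped Γ (.nu x y P)
  | ite {Γ Γ₁ Γ₂ v P Q} : CSplit Γ Γ₁ Γ₂ → CValTy Γ₁ v .bool →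
      CTyped Γ₂ P → CTyped Γ₂ Q → CTyped Γ (.ite v P Q)
  | send {Γ Γ₁ Δ Γ₂ Γ₃ Γ₃' x v q T U P} :
      CSplit Γ Γ₁ Δ → CSplit Δ Γ₂ Γ₃ →
      CValTy Γ₁ (.var x) (.comm q .out T U) →
      CValTy Γ₂ v T → CUpdate Γ₃ x U Γ₃' → CTyped Γ₃' P →
      CTyped Γ (.send x v P)
  | recv {Γ Γ₁ Γ₂ Γ₂' q₁ q₂ x y T U P} :
      CQual q₁ Γ → CSplit Γ Γ₁ Γ₂ →
      CValTy Γ₁ (.var x) (.comm q₂ .inp T U) →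
      CUpdate Γ₂ x U Γ₂' → CTyped ((y,T) :: Γ₂') P →
      CTyped Γ (.recv q₁ x y P)
  | branch {Γ Γ₁ Γ₂ q x ts bs} (g : Nat → CCtx) :
      CSplit Γ Γ₁ Γ₂ → CValTy Γ₁ (.var x) (.choice q .external ts) →
      (hlen : bs.length = ts.length) →
      (hlab : ∀ i (h : i < bs.length) (h' : i < ts.length),
        (bs.get ⟨i, h⟩).1 = (ts.get ⟨i, h'⟩).1) →
      (hupd : ∀ i (h' : i < ts.length), CUpdate Γ₂ x (ts.get ⟨i, h'⟩).2 (g i)) →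
      (hty : ∀ i (h : i < bs.length), CTyped (g i) (bs.get ⟨i, h⟩).2) →
      CTyped Γ (.branch x bs)
  | sel {Γ Γ₁ Γ₂ Γ₂' q x ts l T P} :
      CSplit Γ Γ₁ Γ₂ → CValTy Γ₁ (.var x) (.choice q .internal ts) →
      (l, T) ∈ ts → CUpdate Γ₂ x T Γ₂' → CTyped Γ₂' P →
      CTyped Γ (.select x l P)

/-- Barbs of classical processes (up to restrictions). -/
inductive CBarbAux (x : Name) : CProc → Prop
  | send {v Q R} : CBarbAux x (.par (.send x v Q) R)
  | sel {l Q R} : CBarbAux x (.par (.select x l Q) R)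
  | nu {a b P} : x ≠ a → x ≠ b → CBarbAux x P → CBarbAux x (.nu a b P)

/-- A well-typed classical process has a barb in `x`. -/
def CBarb (Γ : CCtx) (P : CProc) (x : Name) : Prop :=
  CTyped Γ P ∧ ∃ P', CSc P P' ∧ CBarbAux x P'

/-- A classical process has a weak barb in `x`. -/
def CWBarb (P : CProc) (x : Name) : Prop :=
  ∃ P' Γ', CRedStar P P' ∧ CBarb Γ' P' x

/-! # Mixed session types -/

inductive MTy where
  | end_ | unit | bool
  | var (a : Name)
  | mu (a : Name) (T : MTy)
  | choice (q : Qual) (sh : View) (bs : List (Label × Polarity × MTy × MTy))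

def MTy.subst (a : Name) (U : MTy) : MTy → MTy
  | .end_ => .end_
  | .unit => .unit
  | .bool => .bool
  | .var b => if b = a then U else .var b
  | .mu b T => if b = a then .mu b T else .mu b (MTy.subst a U T)
  | .choice q sh bs => .choice q sh
      (bs.attach.map (fun e => (e.1.1, e.1.2.1, MTy.subst a U e.1.2.2.1, MTy.subst a U e.1.2.2.2)))
termination_by T => sizeOf T
decreasing_by
  all_goals simp_wf
  all_goals try omega
  all_goals
    (obtain ⟨⟨l, p, S, T⟩, hmem⟩ := e
     have h := List.sizeOf_lt_of_mem hmem
     simp only [Prod.mk.sizeOf_spec] at h ⊢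
     omega)

/-- The `un` predicate on mixed types. -/
inductive MTy.Un : MTy → Prop
  | end_ : MTy.Un .end_
  | unit : MTy.Un .unit
  | bool : MTy.Un .bool
  | choice {sh bs} : MTy.Un (.choice .un sh bs)
  | mu {a T} : MTy.Un T → MTy.Un (.mu a T)

inductive MTy.IsLin : MTy → Prop
  | choice {sh bs} : MTy.IsLin (.choice .lin sh bs)

abbrev MCtx := List (Name × MTy)

def MCtxUn (Γ : MCtx) : Prop := ∀ e ∈ Γ, MTy.Un e.2

def MQual (q : Qual) (Γ : MCtx) : Prop := q = .un → MCtxUn Γ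

inductive MSplit : MCtx → MCtx → MCtx → Prop
  | nil : MSplit [] [] []
  | both {Γ Γ₁ Γ₂ x T} : MTy.Un T → MSplit Γ Γ₁ Γ₂ →
      MSplit ((x,T) :: Γ) ((x,T) :: Γ₁) ((x,T) :: Γ₂)
  | left {Γ Γ₁ Γ₂ x T} : MTy.IsLin T → MSplit Γ Γ₁ Γ₂ →
      MSplit ((x,T) :: Γ) ((x,T) :: Γ₁) Γ₂
  | right {Γ Γ₁ Γ₂ x T} : MTy.IsLin T → MSplit Γ Γ₁ Γ₂ →
      MSplit ((x,T) :: Γ) Γ₁ ((x,T) :: Γ₂)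

/-- Mixed coinductive subtyping, with a set of assumed pairs. -/
inductive MSub : List (MTy × MTy) → MTy → MTy → Prop
  | assump {Θ S T} : (S, T) ∈ Θ → MSub Θ S T
  | end_ {Θ} : MSub Θ .end_ .end_
  | unit {Θ} : MSub Θ .unit .unit
  | bool {Θ} : MSub Θ .bool .bool
  | muL {Θ a S T} : MSub ((MTy.mu a S, T) :: Θ) (MTy.subst a (MTy.mu a S) S) T →
      MSub Θ (.mu a S) T
  | muR {Θ a S T} : MSub ((S, MTy.mu a T) :: Θ) S (MTy.subst a (MTy.mu a T) T) →
      MSub Θ S (.mu a T)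
  | internal {Θ q bs bs'} (f : Nat → Nat)
      (hf : ∀ i, i < bs'.length → f i < bs.length)
      (hlab : ∀ i (h : i < bs'.length), (bs.get ⟨f i, hf i h⟩).1 = (bs'.get ⟨i, h⟩).1)
      (hpol : ∀ i (h : i < bs'.length), (bs.get ⟨f i, hf i h⟩).2.1 = (bs'.get ⟨i, h⟩).2.1)
      (hout : ∀ i (h : i < bs'.length), (bs'.get ⟨i, h⟩).2.1 = Polarity.out →
        MSub Θ (bs'.get ⟨i, h⟩).2.2.1 (bs.get ⟨f i, hf i h⟩).2.2.1)
      (hinp : ∀ i (h : i < bs'.length), (bs'.get ⟨i, h⟩).2.1 = Polarity.inp →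
        MSub Θ (bs.get ⟨f i, hf i h⟩).2.2.1 (bs'.get ⟨i, h⟩).2.2.1)
      (hcont : ∀ i (h : i < bs'.length), MSub Θ (bs.get ⟨f i, hf i h⟩).2.2.2 (bs'.get ⟨i, h⟩).2.2.2) :
      MSub Θ (.choice q .internal bs) (.choice q .internal bs')
  | external {Θ q bs bs'} (f : Nat → Nat)
      (hf : ∀ i, i < bs.length → f i < bs'.length)
      (hlab : ∀ i (h : i < bs.length), (bs'.get ⟨f i, hf i h⟩).1 = (bs.get ⟨i, h⟩).1)
      (hpol : ∀ i (h : i < bs.length), (bs'.get ⟨f i, hf i h⟩).2.1 = (bs.get ⟨i, h⟩).2.1)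
      (hout : ∀ i (h : i < bs.length), (bs.get ⟨i, h⟩).2.1 = Polarity.out →
        MSub Θ (bs'.get ⟨f i, hf i h⟩).2.2.1 (bs.get ⟨i, h⟩).2.2.1)
      (hinp : ∀ i (h : i < bs.length), (bs.get ⟨i, h⟩).2.1 = Polarity.inp →
        MSub Θ (bs.get ⟨i, h⟩).2.2.1 (bs'.get ⟨f i, hf i h⟩).2.2.1)
      (hcont : ∀ i (h : i < bs.length), MSub Θ (bs.get ⟨i, h⟩).2.2.2 (bs'.get ⟨f i, hf i h⟩).2.2.2) :
      MSub Θ (.choice q .external bs) (.choice q .external bs')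

def MEquiv (S T : MTy) : Prop := MSub [] S T ∧ MSub [] T S

/-- Mixed coinductive type duality. -/
inductive MDual : List (MTy × MTy) → MTy → MTy → Prop
  | assump {Θ S T} : (S, T) ∈ Θ → MDual Θ S T
  | end_ {Θ} : MDual Θ .end_ .end_
  | muL {Θ a S T} : MDual ((MTy.mu a S, T) :: Θ) (MTy.subst a (MTy.mu a S) S) T →
      MDual Θ (.mu a S) T
  | muR {Θ a S T} : MDual ((S, MTy.mu a T) :: Θ) S (MTy.subst a (MTy.mu a T) T) →
      MDual Θ S (.mu a T)
  | choice {Θ q sh bs bs'}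
      (hlen : bs.length = bs'.length)
      (hlab : ∀ i (h : i < bs.length) (h' : i < bs'.length),
        (bs.get ⟨i, h⟩).1 = (bs'.get ⟨i, h'⟩).1)
      (hpol : ∀ i (h : i < bs.length) (h' : i < bs'.length),
        (bs'.get ⟨i, h'⟩).2.1 = (bs.get ⟨i, h⟩).2.1.dual)
      (hpay₁ : ∀ i (h : i < bs.length) (h' : i < bs'.length),
        MSub [] (bs.get ⟨i, h⟩).2.2.1 (bs'.get ⟨i, h'⟩).2.2.1)
      (hpay₂ : ∀ i (h : i < bs.length) (h' : i < bs'.length),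
        MSub [] (bs'.get ⟨i, h'⟩).2.2.1 (bs.get ⟨i, h⟩).2.2.1)
      (hcont : ∀ i (h : i < bs.length) (h' : i < bs'.length),
        MDual Θ (bs.get ⟨i, h⟩).2.2.2 (bs'.get ⟨i, h'⟩).2.2.2) :
      MDual Θ (.choice q sh bs) (.choice q sh.dual bs')

inductive MUpdate : MCtx → Name → MTy → MCtx → Prop
  | add {Γ x T} : x ∉ Γ.map Prod.fst → MUpdate Γ x T ((x,T) :: Γ)
  | keep {Γ₁ Γ₂ x T U} : MTy.Un T → MEquiv T U →
      MUpdate (Γ₁ ++ (x,T) :: Γ₂) x U (Γ₁ ++ (x,T) :: Γ₂)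

/-- Mixed value typing. -/
inductive MValTy : MCtx → Val → MTy → Prop
  | unit {Γ} : MCtxUn Γ → MValTy Γ .unit .unit
  | tt {Γ} : MCtxUn Γ → MValTy Γ .tt .bool
  | ff {Γ} : MCtxUn Γ → MValTy Γ .ff .bool
  | var {Γ₁ Γ₂ x T} : MCtxUn (Γ₁ ++ Γ₂) → MValTy (Γ₁ ++ (x,T) :: Γ₂) (.var x) T
  | sub {Γ v S T} : MValTy Γ v S → MSub [] S T → MValTy Γ v T

/-! # Mixed session processes -/

/-- Data of a branch: either send a value or bind an input variable. -/
inductive BData where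
  | bout (v : Val)
  | binp (z : Name)
deriving DecidableEq

def polOf : BData → Polarity
  | .bout _ => .out
  | .binp _ => .inp

def BData.substV (z : Name) (v : Val) : BData → BData
  | .bout w => .bout (w.subst z v)
  | .binp y => .binp y

def BData.binds (z : Name) : BData → Bool
  | .bout _ => false
  | .binp y => y == z

inductive MProc where
  | nil
  | par (P Q : MProc)
  | nu (x y : Name) (P : MProc)
  | ite (v : Val) (P Q : MProc)
  | choice (q : Qual) (x : Name) (ms : List (Label × BData × MProc))

def BData.fvAdj (d : BData) (l : List Name) : List Name :=
  match d with
  | .bout v => v.fv ++ l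
  | .binp z => l.filter (fun n => n != z)

def MProc.fv : MProc → List Name
  | .nil => []
  | .par P Q => P.fv ++ Q.fv
  | .nu x y P => P.fv.filter (fun n => n != x && n != y)
  | .ite v P Q => v.fv ++ P.fv ++ Q.fv
  | .choice _ x ms => x :: (ms.attach.map (fun e => e.1.2.1.fvAdj e.1.2.2.fv)).flatten
termination_by P => sizeOf P
decreasing_by
  all_goals simp_wf
  all_goals try omega
  all_goals
    (obtain ⟨⟨l, d, P⟩, hmem⟩ := e
     have h := List.sizeOf_lt_of_mem hmem
     simp only [Prod.mk.sizeOf_spec] at h ⊢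
     omega)

def MProc.substV (z : Name) (v : Val) : MProc → MProc
  | .nil => .nil
  | .par P Q => .par (P.substV z v) (Q.substV z v)
  | .nu x y P => if x = z ∨ y = z then .nu x y P else .nu x y (P.substV z v)
  | .ite w P Q => .ite (w.subst z v) (P.substV z v) (Q.substV z v)
  | .choice q x ms => .choice q (substName z v x)
      (ms.attach.map (fun e =>
        (e.1.1, e.1.2.1.substV z v, if e.1.2.1.binds z then e.1.2.2 else e.1.2.2.substV z v)))
termination_by P => sizeOf P
decreasing_by
  all_goals simp_wf
  all_goals try omega
  all_goals
    (obtain ⟨⟨l, d, P⟩, hmem⟩ := e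
     have h := List.sizeOf_lt_of_mem hmem
     simp only [Prod.mk.sizeOf_spec] at h ⊢
     omega)

/-- Structural congruence for mixed processes. -/
inductive MSc : MProc → MProc → Prop
  | parComm {P Q} : MSc (.par P Q) (.par Q P)
  | parAssoc {P Q R} : MSc (.par (.par P Q) R) (.par P (.par Q R))
  | parNil {P} : MSc (.par P .nil) P
  | scope {x y P Q} : MSc (.par (.nu x y P) Q) (.nu x y (.par P Q))
  | nuNil {x y} : MSc (.nu x y .nil) .nil
  | nuComm {w x y z P} : MSc (.nu w x (.nu y z P)) (.nu y z (.nu w x P))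
  | refl (P) : MSc P P
  | symm {P Q} : MSc P Q → MSc Q P
  | trans {P Q R} : MSc P Q → MSc Q R → MSc P R
  | parCong {P P' Q Q'} : MSc P P' → MSc Q Q' → MSc (.par P Q) (.par P' Q')
  | nuCong {x y P P'} : MSc P P' → MSc (.nu x y P) (.nu x y P')
  | iteCong {v P P' Q Q'} : MSc P P' → MSc Q Q' → MSc (.ite v P Q) (.ite v P' Q')
  | choiceCong {q x ms ms'}
      (hlen : ms.length = ms'.length)
      (hlab : ∀ i (h : i < ms.length) (h' : i < ms'.length),
        (ms.get ⟨i, h⟩).1 = (ms'.get ⟨i, h'⟩).1)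
      (hdat : ∀ i (h : i < ms.length) (h' : i < ms'.length),
        (ms.get ⟨i, h⟩).2.1 = (ms'.get ⟨i, h'⟩).2.1)
      (hsc : ∀ i (h : i < ms.length) (h' : i < ms'.length),
        MSc (ms.get ⟨i, h⟩).2.2 (ms'.get ⟨i, h'⟩).2.2) :
      MSc (.choice q x ms) (.choice q x ms')

/-- Reduction in the fragment `M₀` of mixed sessions: the reduction rules of mixed
sessions except for `LinUn` and `UnLin`. -/
inductive M0Red : MProc → MProc → Prop
  | linlin {x y l v z P Q R ms ns} :
      (l, BData.bout v, P) ∈ ms → (l, BData.binp z, Q) ∈ ns →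
      M0Red (.nu x y (.par (.choice .lin x ms) (.par (.choice .lin y ns) R)))
            (.nu x y (.par P (.par (Q.substV z v) R)))
  | unun {x y l v z P Q R ms ns} :
      (l, BData.bout v, P) ∈ ms → (l, BData.binp z, Q) ∈ ns →
      M0Red (.nu x y (.par (.choice .un x ms) (.par (.choice .un y ns) R)))
            (.nu x y (.par P (.par (Q.substV z v)
              (.par (.choice .un x ms) (.par (.choice .un y ns) R)))))
  | iteT {P Q} : M0Red (.ite .tt P Q) P
  | iteF {P Q} : M0Red (.ite .ff P Q) Q
  | res {x y P Q} : M0Red P Q → M0Red (.nu x y P) (.nu x y Q)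
  | par {P Q R} : M0Red P Q → M0Red (.par P R) (.par Q R)
  | struct {P P' Q Q'} : MSc P P' → M0Red P' Q' → MSc Q' Q → M0Red P Q

/-- Label–polarity set equality between the branches of a choice process and
the branches of its choice type. -/
def LPEq (ms : List (Label × BData × MProc)) (tbs : List (Label × Polarity × MTy × MTy)) : Prop :=
  (ms.map (fun b => (b.1, polOf b.2.1))).toFinset = (tbs.map (fun b => (b.1, b.2.1))).toFinset

/-! Mixed process typing `Γ ⊢ P` (with branch typing). -/
mutual
inductive MTyped : MCtx → MProc → Prop
  | nil {Γ} : MCtxUn Γ → MTyped Γ .nil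
  | par {Γ Γ₁ Γ₂ P Q} : MSplit Γ Γ₁ Γ₂ → MTyped Γ₁ P → MTyped Γ₂ Q → MTyped Γ (.par P Q)
  | res {Γ S T x y P} : MDual [] S T → MTyped ((x,S) :: (y,T) :: Γ) P → MTyped Γ (.nu x y P)
  | ite {Γ Γ₁ Γ₂ v P Q} : MSplit Γ Γ₁ Γ₂ → MValTy Γ₁ v .bool →
      MTyped Γ₂ P → MTyped Γ₂ Q → MTyped Γ (.ite v P Q)
  | choice {Γ Γ₁ Γ₂ q₁ q₂ sh x tbs ms} :
      MQual q₁ Γ → MSplit Γ Γ₁ Γ₂ →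
      MValTy Γ₁ (.var x) (.choice q₂ sh tbs) →
      (∀ b ∈ ms, MBrOk Γ₂ x tbs b) →
      LPEq ms tbs →
      MTyped Γ (.choice q₁ x ms)

inductive MBrOk : MCtx → Name → List (Label × Polarity × MTy × MTy) →
    (Label × BData × MProc) → Prop
  | out {Γ₂ Γ₂' Δ₁ Δ₂ x tbs l v P S T} :
      (l, Polarity.out, S, T) ∈ tbs → MUpdate Γ₂ x T Γ₂' → MSplit Γ₂' Δ₁ Δ₂ →
      MValTy Δ₁ v S → MTyped Δ₂ P → MBrOk Γ₂ x tbs (l, BData.bout v, P)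
  | inp {Γ₂ Γ₂' x tbs l z P S T} :
      (l, Polarity.inp, S, T) ∈ tbs → MUpdate Γ₂ x T Γ₂' →
      MTyped ((z, S) :: Γ₂') P → MBrOk Γ₂ x tbs (l, BData.binp z, P)
end

/-- Barbs of mixed processes (up to restrictions); the `q`-qualified choice on `x`. -/
inductive MBarbAux (x : Name) (q : Qual) : MProc → Prop
  | base {ms R} : MBarbAux x q (.par (.choice q x ms) R)
  | nu {a b P} : x ≠ a → x ≠ b → MBarbAux x q P → MBarbAux x q (.nu a b P)

/-- A well-typed mixed process has a barb in `x` (only types can discover barbs: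
`x` must have an internal choice type). -/
def MBarb (Γ : MCtx) (P : MProc) (x : Name) : Prop :=
  MTyped Γ P ∧
  ∃ q P' tbs, MSc P P' ∧ MBarbAux x q P' ∧ MValTy Γ (.var x) (.choice q .internal tbs)

/-! # Translating mixed session types to classical session types -/

/-- The translation `⟦·⟧` of mixed session types into classical session types. -/
def mTyToC : MTy → CTy
  | .end_ => .end_
  | .unit => .unit
  | .bool => .bool
  | .var a => .var a
  | .mu a T => .mu a (mTyToC T)
  | .choice .lin .internal bs =>
      .choice .lin .internal
        (bs.attach.map (fun e =>
          ((e.1.1, e.1.2.1), CTy.comm .lin e.1.2.1 (mTyToC e.1.2.2.1) (mTyToC e.1.2.2.2))))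
  | .choice .lin .external bs =>
      .choice .lin .external
        (bs.attach.map (fun e =>
          ((e.1.1, e.1.2.1.dual), CTy.comm .lin e.1.2.1 (mTyToC e.1.2.2.1) (mTyToC e.1.2.2.2))))
  | .choice .un .internal bs =>
      let inner : CTy := .choice .lin .internal
        (bs.attach.map (fun e =>
          ((e.1.1, e.1.2.1), CTy.comm .lin e.1.2.1 (mTyToC e.1.2.2.1) .end_)))
      let b := inner.maxVar
      .mu b (.comm .un .out inner (.var b))
  | .choice .un .external bs =>
      let inner : CTy := .choice .lin .external
        (bs.attach.map (fun e =>
          ((e.1.1, e.1.2.1.dual), CTy.comm .lin e.1.2.1 (mTyToC e.1.2.2.1) .end_)))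
      let b := inner.maxVar
      .mu b (.comm .un .inp inner (.var b))
termination_by T => sizeOf T
decreasing_by
  all_goals simp_wf
  all_goals try omega
  all_goals
    (obtain ⟨⟨l, p, S, T⟩, hmem⟩ := e
     have h := List.sizeOf_lt_of_mem hmem
     simp only [Prod.mk.sizeOf_spec] at h ⊢
     omega)

/-- Pointwise translation of typing contexts. -/
def mCtxToC (Γ : MCtx) : CCtx := Γ.map (fun e => (e.1, mTyToC e.2))

/-! # Translating mixed session processes to classical session processes -/

/-- A label–polarity fragment of a mixed choice: all branches share the same
label and polarity. -/
inductive Frag where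
  | fout (l : Label) (brs : List (Val × MProc))
  | finp (l : Label) (brs : List (Name × MProc))

def Frag.lp : Frag → Label × Polarity
  | .fout l _ => (l, .out)
  | .finp l _ => (l, .inp)

def Frag.toBrs : Frag → List (Label × BData × MProc)
  | .fout l brs => brs.map (fun b => (l, BData.bout b.1, b.2))
  | .finp l brs => brs.map (fun b => (l, BData.binp b.1, b.2))

/-- Flattening a list of fragments back into a list of choice branches. -/
def fragsToMs (frs : List Frag) : List (Label × BData × MProc) :=
  (frs.map Frag.toBrs).flatten

/-- Free names of a list of classical processes. -/
def cFvs (ds : List CProc) : List Name := (ds.map CProc.fv).flatten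

/-- Free names of a list of classical branches. -/
def cbsFvs (cbs : List (CLabel × CProc)) : List Name := (cbs.map (fun b => b.2.fv)).flatten

/-- `nm` is fresh for the context `Γ`, the subject `x` and the source choice branches. -/
def FreshN (nm : Name) (Γ : MCtx) (x : Name) (frs : List Frag) : Prop :=
  nm ∉ Γ.map Prod.fst ∧ nm ≠ x ∧ nm ∉ (MProc.choice .lin x (fragsToMs frs)).fv

/-! The type-guided translation `⟦Γ ⊢ P⟧` of well-typed mixed processes
(of the fragment `M₀`) into classical processes (Fig. 5 of the paper),
presented as an inductive relation. -/
mutual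
inductive Translates : MCtx → MProc → CProc → Prop
  /- choices are organized in label-polarity fragments, rearranging branches if needed -/
  | perm {Γ q x ms ms' C} : List.Perm ms ms' →
      Translates Γ (.choice q x ms') C → Translates Γ (.choice q x ms) C
  | nil {Γ} : MCtxUn Γ → Translates Γ .nil .nil
  | par {Γ Γ₁ Γ₂ P Q C D} : MSplit Γ Γ₁ Γ₂ →
      Translates Γ₁ P C → Translates Γ₂ Q D → Translates Γ (.par P Q) (.par C D)
  | nu {Γ S T x y P C} : MDual [] S T →
      Translates ((x,S) :: (y,T) :: Γ) P C → Translates Γ (.nu x y P) (.nu x y C)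
  | ite {Γ Γ₁ Γ₂ v P Q C D} : MSplit Γ Γ₁ Γ₂ → MValTy Γ₁ v .bool →
      Translates Γ₂ P C → Translates Γ₂ Q D → Translates Γ (.ite v P Q) (.ite v C D)
  /- a lin choice of external (&) type becomes a branching, with dualized label polarities -/
  | linExt {Γ Γ₁ Δ Γ₂ Γ₃ x tbs frs cbs} :
      MSplit Γ Γ₁ Δ → MSplit Δ Γ₂ Γ₃ →
      MValTy Γ₁ (.var x) (.choice .lin .external tbs) →
      (frs.map Frag.lp).Nodup →
      TrFragsExt Γ₂ Γ₃ Δ x tbs frs cbs →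
      Translates Γ (.choice .lin x (fragsToMs frs)) (.branch x cbs)
  /- a lin choice of internal (⊕) type becomes a non-deterministic choice of selections -/
  | linInt {Γ Γ₁ Δ Γ₂ Γ₃ x tbs frs ds s t} :
      MSplit Γ Γ₁ Δ → MSplit Δ Γ₂ Γ₃ →
      MValTy Γ₁ (.var x) (.choice .lin .internal tbs) →
      (frs.map Frag.lp).Nodup →
      TrFragsInt Γ₂ Γ₃ Δ x tbs frs ds →
      s ≠ t → s ∉ cFvs ds → t ∉ cFvs ds →
      Translates Γ (.choice .lin x (fragsToMs frs)) (NDChoice s t ds)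
  /- an un choice of external (&) type: a replicated-input loop around a branching -/
  | unExt {Γ x tbs frs cbs u v w a} :
      MCtxUn Γ →
      MValTy Γ (.var x) (.choice .un .external tbs) →
      (frs.map Frag.lp).Nodup →
      TrFragsUnExt Γ a u (MTy.choice .un .external tbs) tbs frs cbs →
      FreshN u Γ x frs → FreshN v Γ x frs → FreshN w Γ x frs → FreshN a Γ x frs →
      u ≠ v → u ≠ w → u ≠ a → v ≠ w → v ≠ a → w ≠ a →
      Translates Γ (.choice .un x (fragsToMs frs))
        (.nu u v (.par (.send u .unit .nil)
          (.recv .un v w (.recv .lin x a (.branch a cbs)))))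
  /- an un choice of internal (⊕) type: a replicated-input loop around a
     non-deterministic choice of fresh sessions sent on `x` -/
  | unInt {Γ x tbs frs ds u v w s t} :
      MCtxUn Γ →
      MValTy Γ (.var x) (.choice .un .internal tbs) →
      (frs.map Frag.lp).Nodup →
      TrFragsUnInt Γ x u (MTy.choice .un .internal tbs) tbs frs ds →
      FreshN u Γ x frs → FreshN v Γ x frs → FreshN w Γ x frs →
      u ≠ v → u ≠ w → v ≠ w →
      s ≠ t → s ∉ cFvs ds → t ∉ cFvs ds → s ≠ u → t ≠ u →
      Translates Γ (.choice .un x (fragsToMs frs))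
        (.nu u v (.par (.send u .unit .nil) (.recv .un v w (NDChoice s t ds))))

/- fragments of a lin choice of & type, translated to classical branches -/
inductive TrFragsExt : MCtx → MCtx → MCtx → Name →
    List (Label × Polarity × MTy × MTy) → List Frag → List (CLabel × CProc) → Prop
  | nil {Γ₂ Γ₃ Δ x tbs} : TrFragsExt Γ₂ Γ₃ Δ x tbs [] []
  | consOut {Γ₂ Γ₃ Δ x tbs l S T brs ds s t frs cbs} :
      (l, Polarity.out, S, T) ∈ tbs →
      TrBodiesOut Γ₂ Γ₃ x S T brs ds →
      s ≠ t → s ∉ cFvs ds → t ∉ cFvs ds →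
      TrFragsExt Γ₂ Γ₃ Δ x tbs frs cbs →
      TrFragsExt Γ₂ Γ₃ Δ x tbs (.fout l brs :: frs)
        (((l, Polarity.inp), NDChoice s t ds) :: cbs)
  | consInp {Γ₂ Γ₃ Δ x tbs l S T brs ds s t frs cbs} :
      (l, Polarity.inp, S, T) ∈ tbs →
      TrBodiesInp Δ x S T brs ds →
      s ≠ t → s ∉ cFvs ds → t ∉ cFvs ds →
      TrFragsExt Γ₂ Γ₃ Δ x tbs frs cbs →
      TrFragsExt Γ₂ Γ₃ Δ x tbs (.finp l brs :: frs)
        (((l, Polarity.out), NDChoice s t ds) :: cbs)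

/- fragments of a lin choice of ⊕ type, translated to selections -/
inductive TrFragsInt : MCtx → MCtx → MCtx → Name →
    List (Label × Polarity × MTy × MTy) → List Frag → List CProc → Prop
  | nil {Γ₂ Γ₃ Δ x tbs} : TrFragsInt Γ₂ Γ₃ Δ x tbs [] []
  | consOut {Γ₂ Γ₃ Δ x tbs l S T brs ds s t frs es} :
      (l, Polarity.out, S, T) ∈ tbs →
      TrBodiesOut Γ₂ Γ₃ x S T brs ds →
      s ≠ t → s ∉ cFvs ds → t ∉ cFvs ds →
      TrFragsInt Γ₂ Γ₃ Δ x tbs frs es →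
      TrFragsInt Γ₂ Γ₃ Δ x tbs (.fout l brs :: frs)
        (CProc.select x (l, Polarity.out) (NDChoice s t ds) :: es)
  | consInp {Γ₂ Γ₃ Δ x tbs l S T brs ds s t frs es} :
      (l, Polarity.inp, S, T) ∈ tbs →
      TrBodiesInp Δ x S T brs ds →
      s ≠ t → s ∉ cFvs ds → t ∉ cFvs ds →
      TrFragsInt Γ₂ Γ₃ Δ x tbs frs es →
      TrFragsInt Γ₂ Γ₃ Δ x tbs (.finp l brs :: frs)
        (CProc.select x (l, Polarity.inp) (NDChoice s t ds) :: es)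

/- fragments of an un choice of & type, translated to classical branches on the
   received channel `a`, with continue calls on `u` -/
inductive TrFragsUnExt : MCtx → Name → Name → MTy →
    List (Label × Polarity × MTy × MTy) → List Frag → List (CLabel × CProc) → Prop
  | nil {Γ a u X tbs} : TrFragsUnExt Γ a u X tbs [] []
  | consOut {Γ a u X tbs l S T brs ds s t frs cbs} :
      (l, Polarity.out, S, T) ∈ tbs → MEquiv T X →
      TrBodiesUnOut Γ a u S brs ds →
      s ≠ t → s ∉ cFvs ds → t ∉ cFvs ds →
      TrFragsUnExt Γ a u X tbs frs cbs →
      TrFragsUnExt Γ a u X tbs (.fout l brs :: frs)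
        (((l, Polarity.inp), NDChoice s t ds) :: cbs)
  | consInp {Γ a u X tbs l S T brs ds s t frs cbs} :
      (l, Polarity.inp, S, T) ∈ tbs → MEquiv T X →
      TrBodiesUnInp Γ a u S brs ds →
      s ≠ t → s ∉ cFvs ds → t ∉ cFvs ds →
      TrFragsUnExt Γ a u X tbs frs cbs →
      TrFragsUnExt Γ a u X tbs (.finp l brs :: frs)
        (((l, Polarity.out), NDChoice s t ds) :: cbs)

/- fragments of an un choice of ⊕ type: fresh sessions `(νab)` sent on `x` -/
inductive TrFragsUnInt : MCtx → Name → Name → MTy →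
    List (Label × Polarity × MTy × MTy) → List Frag → List CProc → Prop
  | nil {Γ x u X tbs} : TrFragsUnInt Γ x u X tbs [] []
  | consOut {Γ x u X tbs l S T brs ds a b s t frs es} :
      (l, Polarity.out, S, T) ∈ tbs → MEquiv T X →
      TrBodiesUnOut Γ b u S brs ds →
      a ≠ b → a ≠ x → b ≠ x → a ≠ u → b ≠ u → a ∉ cFvs ds → b ∉ cFvs ds →
      s ≠ t → s ∉ cFvs ds → t ∉ cFvs ds → s ≠ u → t ≠ u → s ≠ b → t ≠ b →
      TrFragsUnInt Γ x u X tbs frs es →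
      TrFragsUnInt Γ x u X tbs (.fout l brs :: frs)
        (CProc.nu a b (.send x (.var a)
          (.select b (l, Polarity.out) (NDChoice s t ds))) :: es)
  | consInp {Γ x u X tbs l S T brs ds a b s t frs es} :
      (l, Polarity.inp, S, T) ∈ tbs → MEquiv T X →
      TrBodiesUnInp Γ b u S brs ds →
      a ≠ b → a ≠ x → b ≠ x → a ≠ u → b ≠ u → a ∉ cFvs ds → b ∉ cFvs ds →
      s ≠ t → s ∉ cFvs ds → t ∉ cFvs ds → s ≠ u → t ≠ u → s ≠ b → t ≠ b →
      TrFragsUnInt Γ x u X tbs frs es →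
      TrFragsUnInt Γ x u X tbs (.finp l brs :: frs)
        (CProc.nu a b (.send x (.var a)
          (.select b (l, Polarity.inp) (NDChoice s t ds))) :: es)

/- bodies of an output fragment of a lin choice on `x` -/
inductive TrBodiesOut : MCtx → MCtx → Name → MTy → MTy →
    List (Val × MProc) → List CProc → Prop
  | nil {Γ₂ Γ₃ x S T} : TrBodiesOut Γ₂ Γ₃ x S T [] []
  | cons {Γ₂ Γ₃ x S T v P C brs ds} :
      MValTy Γ₂ v S → Translates ((x,T) :: Γ₃) P C →
      TrBodiesOut Γ₂ Γ₃ x S T brs ds →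
      TrBodiesOut Γ₂ Γ₃ x S T ((v,P) :: brs) (CProc.send x v C :: ds)

/- bodies of an input fragment of a lin choice on `x` -/
inductive TrBodiesInp : MCtx → Name → MTy → MTy →
    List (Name × MProc) → List CProc → Prop
  | nil {Δ x S T} : TrBodiesInp Δ x S T [] []
  | cons {Δ x S T z P C brs ds} :
      Translates ((x,T) :: (z,S) :: Δ) P C →
      TrBodiesInp Δ x S T brs ds →
      TrBodiesInp Δ x S T ((z,P) :: brs) (CProc.recv .lin x z C :: ds)

/- bodies of an output fragment of an un choice, communicating on `c`,
   with continue calls `u!()` -/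
inductive TrBodiesUnOut : MCtx → Name → Name → MTy →
    List (Val × MProc) → List CProc → Prop
  | nil {Γ c u S} : TrBodiesUnOut Γ c u S [] []
  | cons {Γ c u S v P C brs ds} :
      MValTy Γ v S → Translates Γ P C →
      u ∉ C.fv → c ∉ C.fv →
      TrBodiesUnOut Γ c u S brs ds →
      TrBodiesUnOut Γ c u S ((v,P) :: brs)
        (CProc.send c v (.par (.send u .unit .nil) C) :: ds)

/- bodies of an input fragment of an un choice, communicating on `c`,
   with continue calls `u!()` -/
inductive TrBodiesUnInp : MCtx → Name → Name → MTy →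
    List (Name × MProc) → List CProc → Prop
  | nil {Γ c u S} : TrBodiesUnInp Γ c u S [] []
  | cons {Γ c u S z P C brs ds} :
      Translates ((z,S) :: Γ) P C →
      u ∉ C.fv → c ∉ C.fv →
      TrBodiesUnInp Γ c u S brs ds →
      TrBodiesUnInp Γ c u S ((z,P) :: brs)
        (CProc.recv .lin c z (.par (.send u .unit .nil) C) :: ds)
end

lemma mTyToC_choice_un_internal (bs : List (Label × Polarity × MTy × MTy)) : ∃ b,
    mTyToC (MTy.choice .un .internal bs) =
      CTy.mu b (CTy.comm .un .out
        (CTy.choice .lin .internal (bs.map (fun e =>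
          ((e.1, e.2.1), CTy.comm .lin e.2.1 (mTyToC e.2.2.1) CTy.end_))))
        (CTy.var b)) := by
  rw [mTyToC]
  simp only [List.map_attach_eq_pmap, List.pmap_eq_map]
  exact ⟨_, rfl⟩

lemma mTyToC_choice_un_external (bs : List (Label × Polarity × MTy × MTy)) : ∃ b,
    mTyToC (MTy.choice .un .external bs) =
      CTy.mu b (CTy.comm .un .inp
        (CTy.choice .lin .external (bs.map (fun e =>
          ((e.1, e.2.1.dual), CTy.comm .lin e.2.1 (mTyToC e.2.2.1) CTy.end_))))
        (CTy.var b)) := by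
  rw [mTyToC]
  simp only [List.map_attach_eq_pmap, List.pmap_eq_map]
  exact ⟨_, rfl⟩

lemma mTyToC_choice_un (sh : View) (bs : List (Label × Polarity × MTy × MTy)) :
    ∃ b p U, mTyToC (MTy.choice .un sh bs) = CTy.mu b (CTy.comm .un p U (CTy.var b)) := by
  cases sh
  · exact (mTyToC_choice_un_internal bs).imp fun _ hb => ⟨_, _, hb⟩
  · exact (mTyToC_choice_un_external bs).imp fun _ hb => ⟨_, _, hb⟩

lemma mTyToC_un {T : MTy} (h : T.Un) : (mTyToC T).Un := by
  induction h with
  | end_ => rw [mTyToC]; exact .end_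
  | unit => rw [mTyToC]; exact .unit
  | bool => rw [mTyToC]; exact .bool
  | mu _ ih => rw [mTyToC]; exact .mu ih
  | @choice sh bs =>
    obtain ⟨b, p, U, hb⟩ := mTyToC_choice_un sh bs
    rw [hb]
    exact .mu .comm

/-- For every mixed session type `T` with `un(T)`, the classical
translation `⟦T⟧` is either `end`, `unit`, `bool`, a type `μa.T'` with `un(T')`, or a
μ-type `μb.un⋆(U).b` with `⋆ ∈ {!, ?}`; in particular, `un⊕` types translate to
recursive `un`-output types and `un&` types translate to recursive `un`-input types,
so the translation preserves the direction (output/input) of unrestricted type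
operators. -/
theorem translation_preserves_direction (T : MTy) (h : T.Un) :
    (mTyToC T = CTy.end_ ∨ mTyToC T = CTy.unit ∨ mTyToC T = CTy.bool ∨
      (∃ a T', mTyToC T = CTy.mu a T' ∧ T'.Un) ∨
      (∃ b p U, mTyToC T = CTy.mu b (CTy.comm .un p U (CTy.var b)))) ∧
    (∀ bs : List (Label × Polarity × MTy × MTy), ∃ b,
      mTyToC (MTy.choice .un .internal bs) =
        CTy.mu b (CTy.comm .un .out
          (CTy.choice .lin .internal (bs.map (fun e =>
            ((e.1, e.2.1), CTy.comm .lin e.2.1 (mTyToC e.2.2.1) CTy.end_))))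
          (CTy.var b))) ∧
    (∀ bs : List (Label × Polarity × MTy × MTy), ∃ b,
      mTyToC (MTy.choice .un .external bs) =
        CTy.mu b (CTy.comm .un .inp
          (CTy.choice .lin .external (bs.map (fun e =>
            ((e.1, e.2.1.dual), CTy.comm .lin e.2.1 (mTyToC e.2.2.1) CTy.end_))))
          (CTy.var b))) := by
  refine ⟨?_, mTyToC_choice_un_internal, mTyToC_choice_un_external⟩
  cases h with
  | end_ => simp only [mTyToC, true_or]
  | unit => simp only [mTyToC, true_or, or_true]
  | bool => simp only [mTyToC, true_or, or_true]
  | @mu a T hT => exact .inr <| .inr <| .inr <| .inl ⟨a, mTyToC T, by rw [mTyToC], mTyToC_un hT⟩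
  | @choice sh bs => exact .inr <| .inr <| .inr <| .inr <| mTyToC_choice_un sh bs
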